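/- The symplectic matrices with invertible upper-left d×d block are dense in the set of all 2d×2d real symplectic matrices: for every symplectic H there exists a sequence of symplectic matrices H_n with invertible upper-left block converging to H. -/

import Mathlib

/-!
Left multiplication by the symplectic shear `[[1, t], [0, 1]]` replaces the upper-left block `A`
of `H` by `A + tC`, `C` being the lower-left block, and tends to `H` as `t → 0`. Since `HᵀJH = J`,
`AᵀC` is symmetric, so `(A - iC)ᵀ (A + iC) = AᵀA + CᵀC`, a principal block of the positive definite
matrix `HᵀH`. Hence `det (A + iC) ≠ 0`, the real polynomial `t ↦ det (A + tC)` is nonzero, and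
`A + tC` is invertible for all but finitely many `t`.
-/

open Matrix

def Jmat (d : ℕ) : Matrix (Fin d ⊕ Fin d) (Fin d ⊕ Fin d) ℝ :=
  Matrix.fromBlocks 0 1 (-1) 0

def IsSymplectic {d : ℕ} (H : Matrix (Fin d ⊕ Fin d) (Fin d ⊕ Fin d) ℝ) : Prop :=
  Hᵀ * Jmat d * H = Jmat d

open Filter Topology Complex

namespace Matrix

variable {m n : Type*} [Fintype m] [Fintype n]

theorem toBlocks₁₁_transpose_mul_self {R : Type*} [CommSemiring R]
    (H : Matrix (m ⊕ n) (m ⊕ n) R) :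
    (Hᵀ * H).toBlocks₁₁ = H.toBlocks₁₁ᵀ * H.toBlocks₁₁ + H.toBlocks₂₁ᵀ * H.toBlocks₂₁ := by
  conv_lhs => rw [← fromBlocks_toBlocks H]
  rw [fromBlocks_transpose, fromBlocks_multiply, toBlocks_fromBlocks₁₁]

theorem posDef_toBlocks₁₁_transpose_mul_self [DecidableEq m] [DecidableEq n]
    {H : Matrix (m ⊕ n) (m ⊕ n) ℝ} (hH : IsUnit H.det) :
    (H.toBlocks₁₁ᵀ * H.toBlocks₁₁ + H.toBlocks₂₁ᵀ * H.toBlocks₂₁).PosDef := by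
  have hHH : (Hᵀ * H).PosDef :=
    .conjTranspose_mul_self H (mulVec_injective_iff_isUnit.mpr ((isUnit_iff_isUnit_det H).mpr hH))
  rw [← toBlocks₁₁_transpose_mul_self]
  exact hHH.submatrix Sum.inl_injective

variable [DecidableEq n]

theorem det_map_ofReal_add_I_smul_ne_zero {A C : Matrix n n ℝ} (hsymm : Aᵀ * C = Cᵀ * A)
    (hdet : (Aᵀ * A + Cᵀ * C).det ≠ 0) :
    (A.map ofReal + I • C.map ofReal).det ≠ 0 := by
  have hmul (M N : Matrix n n ℝ) : (M * N).map ofReal = M.map ofReal * N.map ofReal :=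
    Matrix.map_mul (f := ofRealHom)
  have hconj : (A.map ofReal - I • C.map ofReal)ᵀ * (A.map ofReal + I • C.map ofReal)
      = (Aᵀ * A + Cᵀ * C).map ofReal := by
    have hsymm' := congrArg (·.map ofReal) hsymm
    simp only [hmul, transpose_map] at hsymm'
    rw [Matrix.map_add _ ofReal_add, hmul, hmul, transpose_map, transpose_map]
    simp only [transpose_sub, transpose_smul, sub_mul, mul_add, Matrix.smul_mul, Matrix.mul_smul,
      smul_smul, I_mul_I, neg_smul, one_smul, hsymm']
    abel
  have hdet' : ((Aᵀ * A + Cᵀ * C).map ofReal).det = (Aᵀ * A + Cᵀ * C).det :=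
    (RingHom.map_det ofRealHom _).symm
  intro h
  have := congrArg det hconj
  rw [det_mul, h, mul_zero, hdet'] at this
  exact hdet (by exact_mod_cast this.symm)

theorem finite_setOf_det_add_smul_eq_zero {A C : Matrix n n ℝ}
    (h : (A.map ofReal + I • C.map ofReal).det ≠ 0) :
    {t : ℝ | (A + t • C).det = 0}.Finite := by
  let p : Polynomial ℝ :=
    (A.map Polynomial.C + (Polynomial.X : Polynomial ℝ) • C.map Polynomial.C).det
  have heval (t : ℝ) : p.eval t = (A + t • C).det := by
    rw [← Polynomial.coe_evalRingHom, RingHom.map_det]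
    congr 1
    ext i j
    simp only [RingHom.mapMatrix_apply, Polynomial.coe_evalRingHom, map_apply, add_apply, smul_apply,
      smul_eq_mul, Polynomial.X_mul_C, Polynomial.eval_add, Polynomial.eval_C, Polynomial.eval_mul,
      Polynomial.eval_X, add_right_inj]
    ring
  have haeval : Polynomial.aeval I p = (A.map ofReal + I • C.map ofReal).det := by
    rw [AlgHom.map_det]
    congr 1
    ext i j
    simp only [AlgHom.mapMatrix_apply, map_apply, add_apply, smul_apply, smul_eq_mul,
      Polynomial.X_mul_C, map_add, Polynomial.aeval_C, coe_algebraMap, map_mul, Polynomial.aeval_X,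
      add_right_inj]
    ring
  have hp : p ≠ 0 := fun hp => h (by rw [← haeval, hp, map_zero])
  simpa [heval] using Polynomial.finite_setOfPred_isRoot hp

theorem frequently_isUnit_add_smul {A C : Matrix n n ℝ}
    (h : (A.map ofReal + I • C.map ofReal).det ≠ 0) :
    ∃ᶠ t in 𝓝 (0 : ℝ), IsUnit (A + t • C) := by
  have hne : ∀ᶠ t in 𝓝[≠] (0 : ℝ), (A + t • C).det ≠ 0 :=
    nhdsNE_le_cofinite 0 (finite_setOf_det_add_smul_eq_zero h).compl_mem_cofinite
  exact (hne.frequently.filter_mono nhdsWithin_le_nhds).mono fun t ht =>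
    (isUnit_iff_isUnit_det _).mpr (isUnit_iff_ne_zero.mpr ht)

end Matrix

variable {d : ℕ}

theorem Jmat_transpose_mul_self : (Jmat d)ᵀ * Jmat d = 1 := by
  simp [Jmat, fromBlocks_transpose, fromBlocks_multiply]

theorem IsSymplectic.isUnit_det {H : Matrix (Fin d ⊕ Fin d) (Fin d ⊕ Fin d) ℝ}
    (h : IsSymplectic H) : IsUnit H.det :=
  isUnit_det_of_left_inverse (B := (Jmat d)ᵀ * Hᵀ * Jmat d) <| by
    rw [mul_assoc, mul_assoc, ← mul_assoc Hᵀ, h, Jmat_transpose_mul_self]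

theorem IsSymplectic.mul {M H : Matrix (Fin d ⊕ Fin d) (Fin d ⊕ Fin d) ℝ}
    (hM : IsSymplectic M) (hH : IsSymplectic H) : IsSymplectic (M * H) := by
  unfold IsSymplectic at *
  calc (M * H)ᵀ * Jmat d * (M * H) = Hᵀ * (Mᵀ * Jmat d * M) * H := by
        simp only [transpose_mul, Matrix.mul_assoc]
    _ = Jmat d := by rw [hM, hH]

theorem IsSymplectic.transpose_toBlocks₁₁_mul_toBlocks₂₁
    {H : Matrix (Fin d ⊕ Fin d) (Fin d ⊕ Fin d) ℝ} (h : IsSymplectic H) :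
    H.toBlocks₁₁ᵀ * H.toBlocks₂₁ = H.toBlocks₂₁ᵀ * H.toBlocks₁₁ := by
  rw [IsSymplectic, Jmat, ← fromBlocks_toBlocks H] at h
  have h₁₁ := congrArg toBlocks₁₁ h
  simp only [fromBlocks_transpose, fromBlocks_multiply, mul_zero, mul_neg, mul_one, zero_add,
    add_zero, neg_mul, toBlocks_fromBlocks₁₁] at h₁₁
  exact (neg_add_eq_zero.mp h₁₁).symm

def symplecticShear (d : ℕ) (t : ℝ) : Matrix (Fin d ⊕ Fin d) (Fin d ⊕ Fin d) ℝ :=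
  fromBlocks 1 (t • 1) 0 1

theorem isSymplectic_symplecticShear (t : ℝ) : IsSymplectic (symplecticShear d t) := by
  simp [IsSymplectic, symplecticShear, Jmat, fromBlocks_transpose, fromBlocks_multiply]

theorem symplecticShear_zero : symplecticShear d 0 = 1 := by
  simp [symplecticShear]

theorem continuous_symplecticShear : Continuous (symplecticShear d) :=
  continuous_const.matrix_fromBlocks (continuous_id.smul continuous_const) continuous_const
    continuous_const

theorem toBlocks₁₁_symplecticShear_mul (t : ℝ) (H : Matrix (Fin d ⊕ Fin d) (Fin d ⊕ Fin d) ℝ) :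
    (symplecticShear d t * H).toBlocks₁₁ = H.toBlocks₁₁ + t • H.toBlocks₂₁ := by
  conv_lhs => rw [← fromBlocks_toBlocks H]
  simp [symplecticShear, fromBlocks_multiply]

theorem stmt17 (d : ℕ) (H : Matrix (Fin d ⊕ Fin d) (Fin d ⊕ Fin d) ℝ)
    (h : IsSymplectic H) :
    ∃ f : ℕ → Matrix (Fin d ⊕ Fin d) (Fin d ⊕ Fin d) ℝ,
      (∀ n, IsSymplectic (f n) ∧ IsUnit ((f n).toBlocks₁₁)) ∧
      Filter.Tendsto f Filter.atTop (nhds H) := by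
  have hAC := det_map_ofReal_add_I_smul_ne_zero h.transpose_toBlocks₁₁_mul_toBlocks₂₁
    (posDef_toBlocks₁₁_transpose_mul_self h.isUnit_det).det_pos.ne'
  obtain ⟨s, hs, hunit⟩ := frequently_iff_seq_forall.mp (frequently_isUnit_add_smul hAC)
  refine ⟨fun n => symplecticShear d (s n) * H,
    fun n => ⟨(isSymplectic_symplecticShear _).mul h, ?_⟩, ?_⟩
  · rw [toBlocks₁₁_symplecticShear_mul]
    exact hunit n
  · have hcont : Continuous fun t => symplecticShear d t * H :=
      continuous_symplecticShear.mul continuous_const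
    have hlim := (hcont.tendsto 0).comp hs
    rwa [symplecticShear_zero, one_mul] at hlim
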